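/- arXiv:2603.20272 — 2 statements merged into one kernel-verified Lean document; each statement's English description precedes it below -/
import Mathlib

section
/- Let V be a finite-dimensional ℚ-vector space carrying a mixed ℚ-Hodge structure (W_•, F^•) and let (I^{p,q}) be a bigraduation of (V, W_•, F^•). Then every v ∈ V with 1⊗v ∈ I^{0,0} satisfies v ∈ W₀ and 1⊗v ∈ F⁰. If moreover (I^{p,q}) satisfies the conjugation condition, then the converse also holds, so that {v ∈ V : 1⊗v ∈ I^{0,0}} = {v ∈ W₀ : 1⊗v ∈ F⁰}. -/
/-!
A rational vector `x = 1 ⊗ v` is fixed by `σ`. If `x ∈ F⁰ ∩ (ℂ ⊗ W₀)`, it lies in the sum of the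
`I^{p,q}` with `p ≥ 0` and `p + q ≤ 0`. The conjugation condition sends each of these into
`I^{0,0} ⊕ ⨁_{r < 0} I^{r,s}`, so `x = σ x` lies there as well, and independence of the `I^{p,q}`
leaves `x ∈ I^{0,0}`. Conversely `I^{0,0} ⊆ F⁰ ∩ (ℂ ⊗ W₀)`, and `1 ⊗ v ∈ ℂ ⊗ W₀` forces
`v ∈ W₀` because `ℂ` is faithfully flat over `ℚ`.
-/

open scoped TensorProduct

noncomputable section

/-- Complex conjugation on `ℂ`, as a `ℚ`-linear map. -/
def conjQ : ℂ →ₗ[ℚ] ℂ where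
  toFun z := (starRingEnd ℂ) z
  map_add' x y := map_add _ x y
  map_smul' q z := by
    simp [Rat.smul_def]

variable (V : Type) [AddCommGroup V] [Module ℚ V]

/-- The conjugate-linear involution of the complexification `ℂ ⊗[ℚ] V`,
given by complex conjugation on the `ℂ` factor (viewed as a `ℚ`-linear map). -/
def sigmaV : ℂ ⊗[ℚ] V →ₗ[ℚ] ℂ ⊗[ℚ] V :=
  TensorProduct.map conjQ (LinearMap.id : V →ₗ[ℚ] V)

/-- The `ℂ`-subspace generated by the conjugate of a `ℂ`-subspace of `ℂ ⊗[ℚ] V`;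
since conjugation is conjugate-linear, this is just the image of the subspace. -/
def conjSpan (S : Submodule ℂ (ℂ ⊗[ℚ] V)) : Submodule ℂ (ℂ ⊗[ℚ] V) :=
  Submodule.span ℂ (⇑(sigmaV V) '' (S : Set (ℂ ⊗[ℚ] V)))

/-- The `ℂ`-subspace of `ℂ ⊗[ℚ] V` corresponding to `ℂ ⊗[ℚ] (W k)`. -/
def WC (W : ℤ → Submodule ℚ V) (k : ℤ) : Submodule ℂ (ℂ ⊗[ℚ] V) :=
  Submodule.span ℂ ((fun v : V => (1 : ℂ) ⊗ₜ[ℚ] v) '' (W k : Set V))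

/-- A mixed `ℚ`-Hodge structure on `V`: an increasing exhaustive weight filtration `W`
by `ℚ`-subspaces of `V`, a decreasing exhaustive Hodge filtration `F` by `ℂ`-subspaces of
`ℂ ⊗[ℚ] V`, such that for every `n` and `p`, the images of `F^p ∩ (ℂ ⊗ W_n)` and of
`σ (F^{n+1-p} ∩ (ℂ ⊗ W_n))` in `Gr_n = (ℂ ⊗ W_n)/(ℂ ⊗ W_{n-1})` form an internal direct
sum decomposition of `Gr_n` (stated in the lattice of subspaces of `ℂ ⊗[ℚ] V`). -/
structure IsMixedHodgeStructure (W : ℤ → Submodule ℚ V)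
    (F : ℤ → Submodule ℂ (ℂ ⊗[ℚ] V)) : Prop where
  mono_W : Monotone W
  anti_F : Antitone F
  W_eventually_bot : ∃ a : ℤ, ∀ k ≤ a, W k = ⊥
  W_eventually_top : ∃ b : ℤ, ∀ k : ℤ, b ≤ k → W k = ⊤
  F_eventually_top : ∃ a : ℤ, ∀ p ≤ a, F p = ⊤
  F_eventually_bot : ∃ b : ℤ, ∀ p : ℤ, b ≤ p → F p = ⊥
  graded_sup : ∀ n p : ℤ,
    (F p ⊓ WC V W n) ⊔ conjSpan V (F (n + 1 - p) ⊓ WC V W n) ⊔ WC V W (n - 1)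
      = WC V W n
  graded_inf : ∀ n p : ℤ,
    ((F p ⊓ WC V W n) ⊔ WC V W (n - 1)) ⊓
        (conjSpan V (F (n + 1 - p) ⊓ WC V W n) ⊔ WC V W (n - 1))
      = WC V W (n - 1)

/-- The subspace `⊕_{r<p, s<q} I^{r,s}`. -/
def lowerPieces (I : ℤ × ℤ → Submodule ℂ (ℂ ⊗[ℚ] V)) (p q : ℤ) :
    Submodule ℂ (ℂ ⊗[ℚ] V) :=
  ⨆ rs ∈ {rs : ℤ × ℤ | rs.1 < p ∧ rs.2 < q}, I rs

/-- A bigraduation of the mixed Hodge structure `(V, W, F)`: a family `I^{p,q}` of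
`ℂ`-subspaces of `ℂ ⊗[ℚ] V`, only finitely many nonzero, forming an internal direct sum
decomposition of `ℂ ⊗[ℚ] V`, with `ℂ ⊗ W_k = ⊕_{p+q ≤ k} I^{p,q}` and
`F^r = ⊕_{p ≥ r} I^{p,q}`. -/
structure IsBigraduation (W : ℤ → Submodule ℚ V) (F : ℤ → Submodule ℂ (ℂ ⊗[ℚ] V))
    (I : ℤ × ℤ → Submodule ℂ (ℂ ⊗[ℚ] V)) : Prop where
  finite : {pq : ℤ × ℤ | I pq ≠ ⊥}.Finite
  internal : DirectSum.IsInternal I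
  weight : ∀ k : ℤ, WC V W k = ⨆ pq ∈ {pq : ℤ × ℤ | pq.1 + pq.2 ≤ k}, I pq
  hodge : ∀ r : ℤ, F r = ⨆ pq ∈ {pq : ℤ × ℤ | r ≤ pq.1}, I pq

/-- The conjugation condition: for all `(p,q)`, the images of `I^{p,q}` and of
`σ(I^{q,p})` in `V_ℂ / ⊕_{r<p,s<q} I^{r,s}` coincide. -/
def ConjugationCondition (I : ℤ × ℤ → Submodule ℂ (ℂ ⊗[ℚ] V)) : Prop :=
  ∀ p q : ℤ,
    I (p, q) ⊔ lowerPieces V I p q = conjSpan V (I (q, p)) ⊔ lowerPieces V I p q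

theorem iSupIndep.biSup_inf_biSup {α ι : Type*} [CompleteLattice α] [IsModularLattice α]
    [IsCompactlyGenerated α] {f : ι → α} (hf : iSupIndep f) (s t : Set ι) :
    (⨆ i ∈ s, f i) ⊓ (⨆ i ∈ t, f i) = ⨆ i ∈ s ∩ t, f i := by
  have hsplit : ⨆ i ∈ s, f i = (⨆ i ∈ s ∩ t, f i) ⊔ ⨆ i ∈ s \ t, f i := by
    rw [← iSup_union, Set.inter_union_sdiff]
  have hle : ⨆ i ∈ s ∩ t, f i ≤ ⨆ i ∈ t, f i := biSup_mono fun _ ↦ And.right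
  rw [hsplit, sup_inf_assoc_of_le _ hle,
    (hf.disjoint_biSup_biSup Set.disjoint_sdiff_left).eq_bot, sup_bot_eq]

theorem Submodule.mem_of_one_tmul_mem_baseChange {R M A : Type*} [CommRing R] [Ring A]
    [Algebra R A] [Module.FaithfullyFlat R A] [AddCommGroup M] [Module R M]
    {p : Submodule R M} {m : M} (h : (1 : A) ⊗ₜ[R] m ∈ p.baseChange A) : m ∈ p := by
  rw [← Submodule.span_singleton_le_iff_mem, ← Submodule.baseChange_le_iff (A := A),
    Submodule.baseChange_span, Submodule.span_le]
  simpa using h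

theorem WC_eq_baseChange (W : ℤ → Submodule ℚ V) (k : ℤ) : WC V W k = (W k).baseChange ℂ := by
  rw [Submodule.baseChange_eq_span, WC, Submodule.map_coe]
  rfl

theorem one_tmul_mem_WC_iff (W : ℤ → Submodule ℚ V) (k : ℤ) (v : V) :
    (1 : ℂ) ⊗ₜ[ℚ] v ∈ WC V W k ↔ v ∈ W k := by
  rw [WC_eq_baseChange]
  exact ⟨Submodule.mem_of_one_tmul_mem_baseChange, Submodule.tmul_mem_baseChange_of_mem 1⟩

theorem sigmaV_one_tmul (v : V) : sigmaV V ((1 : ℂ) ⊗ₜ[ℚ] v) = (1 : ℂ) ⊗ₜ[ℚ] v := by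
  simp [sigmaV, conjQ]

theorem sigmaV_mem_conjSpan {S : Submodule ℂ (ℂ ⊗[ℚ] V)} {x : ℂ ⊗[ℚ] V} (hx : x ∈ S) :
    sigmaV V x ∈ conjSpan V S :=
  Submodule.subset_span ⟨x, hx, rfl⟩

theorem conjSpan_le_iff (S T : Submodule ℂ (ℂ ⊗[ℚ] V)) :
    conjSpan V S ≤ T ↔ S.restrictScalars ℚ ≤ (T.restrictScalars ℚ).comap (sigmaV V) := by
  rw [conjSpan, Submodule.span_le, Set.image_subset_iff]
  rfl

theorem conjSpan_iSup_le_iff {ι : Sort*} (S : ι → Submodule ℂ (ℂ ⊗[ℚ] V))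
    (T : Submodule ℂ (ℂ ⊗[ℚ] V)) :
    conjSpan V (⨆ i, S i) ≤ T ↔ ∀ i, conjSpan V (S i) ≤ T := by
  simp only [conjSpan_le_iff, Submodule.restrictScalars_iSup, iSup_le_iff]

namespace IsBigraduation

variable {V} {W : ℤ → Submodule ℚ V} {F : ℤ → Submodule ℂ (ℂ ⊗[ℚ] V)}
  {I : ℤ × ℤ → Submodule ℂ (ℂ ⊗[ℚ] V)}

theorem le_WC (hI : IsBigraduation V W F I) {pq : ℤ × ℤ} {k : ℤ} (h : pq.1 + pq.2 ≤ k) :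
    I pq ≤ WC V W k :=
  hI.weight k ▸ le_biSup I h

theorem le_F (hI : IsBigraduation V W F I) {pq : ℤ × ℤ} {r : ℤ} (h : r ≤ pq.1) : I pq ≤ F r :=
  hI.hodge r ▸ le_biSup I h

theorem mem_W_and_mem_F_of_one_tmul_mem (hI : IsBigraduation V W F I) {v : V}
    (hv : (1 : ℂ) ⊗ₜ[ℚ] v ∈ I (0, 0)) : v ∈ W 0 ∧ (1 : ℂ) ⊗ₜ[ℚ] v ∈ F 0 :=
  ⟨(one_tmul_mem_WC_iff V W 0 v).1 (hI.le_WC (by simp) hv), hI.le_F (by simp) hv⟩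

end IsBigraduation

namespace ConjugationCondition

variable {V} {I : ℤ × ℤ → Submodule ℂ (ℂ ⊗[ℚ] V)}

theorem conjSpan_le (hc : ConjugationCondition V I) (p q : ℤ) :
    conjSpan V (I (p, q)) ≤ I (q, p) ⊔ lowerPieces V I q p :=
  hc q p ▸ le_sup_left

theorem conjSpan_hodge_weight_le (hc : ConjugationCondition V I) :
    conjSpan V (⨆ pq ∈ {pq : ℤ × ℤ | 0 ≤ pq.1} ∩ {pq | pq.1 + pq.2 ≤ 0}, I pq) ≤
      ⨆ pq ∈ insert (0, 0) {pq : ℤ × ℤ | pq.1 < 0}, I pq := by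
  simp only [conjSpan_iSup_le_iff]
  rintro ⟨p, q⟩ ⟨hp, hpq⟩
  simp only [Set.mem_ofPred_eq] at hp hpq
  refine (hc.conjSpan_le p q).trans (sup_le (le_biSup I ?_) (biSup_mono ?_))
  · -- `p ≥ 0` and `p + q ≤ 0` give `q ≤ 0`, with equality only at `(p, q) = (0, 0)`
    simp only [Set.mem_insert_iff, Set.mem_ofPred_eq, Prod.mk.injEq]
    omega
  · rintro ⟨r, s⟩ ⟨hr, -⟩
    exact Or.inr (show r < 0 by omega)

end ConjugationCondition

theorem rational_vectors_of_bigraduation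
    (W : ℤ → Submodule ℚ V) (F : ℤ → Submodule ℂ (ℂ ⊗[ℚ] V))
    (I : ℤ × ℤ → Submodule ℂ (ℂ ⊗[ℚ] V)) (hI : IsBigraduation V W F I) :
    (∀ v : V, (1 : ℂ) ⊗ₜ[ℚ] v ∈ I (0, 0) → v ∈ W 0 ∧ (1 : ℂ) ⊗ₜ[ℚ] v ∈ F 0) ∧
    (ConjugationCondition V I →
      ∀ v : V, (1 : ℂ) ⊗ₜ[ℚ] v ∈ I (0, 0) ↔ v ∈ W 0 ∧ (1 : ℂ) ⊗ₜ[ℚ] v ∈ F 0) := by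
  refine ⟨fun v ↦ hI.mem_W_and_mem_F_of_one_tmul_mem, fun hc v ↦
    ⟨hI.mem_W_and_mem_F_of_one_tmul_mem, fun ⟨hvW, hvF⟩ ↦ ?_⟩⟩
  have hindep := hI.internal.submodule_iSupIndep
  have hF : (1 : ℂ) ⊗ₜ[ℚ] v ∈ ⨆ pq ∈ {pq : ℤ × ℤ | 0 ≤ pq.1}, I pq := hI.hodge 0 ▸ hvF
  have hW : (1 : ℂ) ⊗ₜ[ℚ] v ∈ ⨆ pq ∈ {pq : ℤ × ℤ | pq.1 + pq.2 ≤ 0}, I pq :=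
    hI.weight 0 ▸ (one_tmul_mem_WC_iff V W 0 v).2 hvW
  have hFW := hindep.biSup_inf_biSup _ _ ▸ Submodule.mem_inf.2 ⟨hF, hW⟩
  have hconj : (1 : ℂ) ⊗ₜ[ℚ] v ∈ ⨆ pq ∈ insert (0, 0) {pq : ℤ × ℤ | pq.1 < 0}, I pq :=
    sigmaV_one_tmul V v ▸ hc.conjSpan_hodge_weight_le (sigmaV_mem_conjSpan V hFW)
  have hsingle : insert (0, 0) {pq : ℤ × ℤ | pq.1 < 0} ∩ {pq | 0 ≤ pq.1} = {(0, 0)} := by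
    ext ⟨p, q⟩
    simp only [Set.mem_inter_iff, Set.mem_insert_iff, Set.mem_ofPred_eq, Set.mem_singleton_iff,
      Prod.mk.injEq]
    omega
  have hx := hindep.biSup_inf_biSup _ _ ▸ Submodule.mem_inf.2 ⟨hconj, hF⟩
  rwa [hsingle, iSup_singleton] at hx
end
end

section
/- Let a, b ∈ ℤ with b ≠ 2a. Then every point (x₁, x₂) ∈ C for which there exist roots of unity ζ₁, ζ₂ and x ∈ ℂ^× with x₁ = ζ₁·x^a and x₂ = ζ₂·x^b satisfies |x₁| = 3^{a/(2a−b)}, the real power of 3 with real exponent a/(2a−b). Consequently, the set of all such points (x₁, x₂) is not dense in C for the topology induced from ℂ × ℂ. -/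
/-!
Taking absolute values, a torsion point `(ζ₁ x^a, ζ₂ x^b)` of the curve `x₁² = 3 x₂` gives
`r^(2a) = 3 r^b` for `r = |x|`, so `r^(2a-b) = 3` and `|x₁| = r^a = 3^(a/(2a-b))` as soon as
`2a ≠ b`. The locus therefore lies in the closed set `|x₁| = 3^(a/(2a-b))`, which misses
points of the curve, such as `(t, t²/3)` for a large real `t`.
-/

/-- `ζ` is a root of unity in `ℂ`. -/
def IsRootOfUnity (ζ : ℂ) : Prop := ∃ n : ℕ, 0 < n ∧ ζ ^ n = 1

/-- The curve `C = {(x₁, x₂) ∈ ℂ^× × ℂ^× : x₁² = 3·x₂}` inside `ℂ × ℂ`. -/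
def curveC : Set (ℂ × ℂ) := {p : ℂ × ℂ | p.1 ≠ 0 ∧ p.2 ≠ 0 ∧ p.1 ^ 2 = 3 * p.2}

/-- The set of points of `C` lying on the torsion translate of the subtorus
`{(x^a, x^b)}` by some pair of roots of unity. -/
def torsionLocus (a b : ℤ) : Set (ℂ × ℂ) :=
  {p ∈ curveC | ∃ ζ₁ ζ₂ x : ℂ, IsRootOfUnity ζ₁ ∧ IsRootOfUnity ζ₂ ∧ x ≠ 0 ∧
    p.1 = ζ₁ * x ^ a ∧ p.2 = ζ₂ * x ^ b}

lemma IsRootOfUnity.norm_eq_one {ζ : ℂ} (hζ : IsRootOfUnity ζ) : ‖ζ‖ = 1 := by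
  obtain ⟨n, hn, hζn⟩ := hζ
  exact Complex.norm_eq_one_of_pow_eq_one hζn hn.ne'

lemma zpow_eq_rpow_div_of_zpow_eq {r t : ℝ} (hr : 0 ≤ r) {n : ℤ} (hn : n ≠ 0)
    (h : r ^ n = t) (a : ℤ) : r ^ a = t ^ ((a : ℝ) / n) := by
  have hn' : (n : ℝ) ≠ 0 := Int.cast_ne_zero.mpr hn
  rw [← h, ← Real.rpow_intCast, ← Real.rpow_intCast, ← Real.rpow_mul hr,
    mul_div_cancel₀ _ hn']

lemma exists_norm_fst_eq_zpow_of_mem_torsionLocus {a b : ℤ} {p : ℂ × ℂ}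
    (hp : p ∈ torsionLocus a b) : ∃ r : ℝ, 0 < r ∧ ‖p.1‖ = r ^ a ∧ r ^ (2 * a - b) = 3 := by
  obtain ⟨⟨-, -, hcurve⟩, ζ₁, ζ₂, x, hζ₁, hζ₂, hx, hp₁, hp₂⟩ := hp
  have hr : 0 < ‖x‖ := norm_pos_iff.mpr hx
  have hnorm₂ : ‖p.2‖ = ‖x‖ ^ b := by
    rw [hp₂, norm_mul, hζ₂.norm_eq_one, one_mul, norm_zpow]
  have hnorm₁ : ‖p.1‖ = ‖x‖ ^ a := by
    rw [hp₁, norm_mul, hζ₁.norm_eq_one, one_mul, norm_zpow]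
  have hnorm_curve : ‖x‖ ^ (2 * a) = 3 * ‖x‖ ^ b := by
    have := congrArg norm hcurve
    rw [norm_pow, norm_mul, hnorm₁, hnorm₂, ← zpow_natCast, ← zpow_mul, mul_comm] at this
    simpa using this
  refine ⟨‖x‖, hr, hnorm₁, ?_⟩
  rw [zpow_sub₀ hr.ne', hnorm_curve, mul_div_cancel_right₀ _ (zpow_ne_zero _ hr.ne')]

lemma mk_mem_curveC {z : ℂ} (hz : z ≠ 0) : (z, z ^ 2 / 3) ∈ curveC :=
  ⟨hz, by simpa using hz, by ring⟩

lemma exists_mem_curveC_norm_fst_ne (c : ℝ) : ∃ p ∈ curveC, ‖p.1‖ ≠ c := by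
  have hpos : 0 < |c| + 1 := by positivity
  refine ⟨_, mk_mem_curveC (Complex.ofReal_ne_zero.mpr hpos.ne'), ?_⟩
  rw [Complex.norm_real, Real.norm_of_nonneg hpos.le]
  linarith [le_abs_self c]

/-- for `b ≠ 2a`, every point of `C` lying on a torsion translate of the
subtorus `{(x^a, x^b)}` has `|x₁| = 3^{a/(2a−b)}`; consequently the set of such points
is not dense in `C` for the topology induced from `ℂ × ℂ`. -/
theorem torsionLocus_abs_eq_and_not_dense (a b : ℤ) (h : b ≠ 2 * a) :
    (∀ p ∈ torsionLocus a b,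
        ‖p.1‖ = (3 : ℝ) ^ ((a : ℝ) / (2 * (a : ℝ) - (b : ℝ)))) ∧
    ¬ curveC ⊆ closure (torsionLocus a b) := by
  have habs : ∀ p ∈ torsionLocus a b,
      ‖p.1‖ = (3 : ℝ) ^ ((a : ℝ) / (2 * (a : ℝ) - (b : ℝ))) := by
    intro p hp
    obtain ⟨r, hr, hp₁, hr3⟩ := exists_norm_fst_eq_zpow_of_mem_torsionLocus hp
    rw [hp₁, zpow_eq_rpow_div_of_zpow_eq hr.le (sub_ne_zero.mpr h.symm) hr3]
    norm_cast
  refine ⟨habs, fun hdense => ?_⟩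
  obtain ⟨p, hp, hne⟩ := exists_mem_curveC_norm_fst_ne ((3 : ℝ) ^ ((a : ℝ) / (2 * a - b)))
  have hclosed : IsClosed {q : ℂ × ℂ | ‖q.1‖ = (3 : ℝ) ^ ((a : ℝ) / (2 * a - b))} :=
    isClosed_eq (by fun_prop) continuous_const
  exact hne (closure_minimal habs hclosed (hdense hp))
end
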